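/- Let λ = (k, 1^{N-k}) be a hook partition of N with 1 ≤ k ≤ N, and μ = (l, 1^{n-l}) a hook partition of n, with n ≤ N. Then there exists a chain μ = μ_0 ⊂ μ_1 ⊂ ... ⊂ μ_q = λ (N = n + 2q) where each μ_{j+1}\μ_j is a horizontal 2-strip, if and only if 0 ≤ 2q - k + l ≤ q; in particular if μ = (n) is a single row, such a chain exists only when λ = (N). -/

import Mathlib

/-- The Young diagram of the hook partition `(k, 1^{N-k})` of `N` (for `1 ≤ k ≤ N`):
first row of length `k`, first column of length `N - k + 1`. -/
def hookYD (N k : ℕ) : YoungDiagram where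
  cells :=
    ((Finset.range k).image fun j => (0, j)) ∪
      ((Finset.range (N - k + 1)).image fun i => (i, 0))
  isLowerSet := by
    rintro ⟨i, j⟩ ⟨i', j'⟩ ⟨hi, hj⟩ hmem
    simp only [Finset.coe_union, Finset.coe_image, Finset.coe_range, Set.mem_union,
      Set.mem_image, Set.mem_Iio, Prod.mk.injEq] at hmem ⊢
    rcases hmem with ⟨a, ha, h0, hja⟩ | ⟨a, ha, hia, h0⟩
    · exact Or.inl ⟨j', by omega, by omega, rfl⟩
    · exact Or.inr ⟨i', by omega, rfl, by omega⟩

/-- `ν` is obtained from `μ` by adding a horizontal 2-strip: two cells in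
distinct columns. -/
def IsHorizontalTwoStrip (μ ν : YoungDiagram) : Prop :=
  μ ≤ ν ∧ ν.card = μ.card + 2 ∧
    ∀ i₁ i₂ j : ℕ, (i₁, j) ∈ ν.cells \ μ.cells → (i₂, j) ∈ ν.cells \ μ.cells → i₁ = i₂

/-- `p(λ, μ)`: the number of chains `μ = μ₀ ⊂ μ₁ ⊂ ⋯ ⊂ μ_q = λ` of Young diagrams in
which each `μ_{j+1} \ μ_j` is a horizontal 2-strip. -/
noncomputable def chainCount (q : ℕ) (μ lam : YoungDiagram) : ℕ :=
  Nat.card {c : Fin (q + 1) → YoungDiagram //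
    c 0 = μ ∧ c (Fin.last q) = lam ∧
      ∀ j : Fin q, IsHorizontalTwoStrip (c j.castSucc) (c j.succ)}

lemma mem_hookYD {N k i j : ℕ} :
    (i, j) ∈ hookYD N k ↔ (i = 0 ∧ j < k) ∨ (j = 0 ∧ i < N - k + 1) := by
  change (i, j) ∈ (((Finset.range k).image fun j => ((0:ℕ), j)) ∪
      ((Finset.range (N - k + 1)).image fun i => (i, (0:ℕ)))) ↔ _
  simp only [hookYD, YoungDiagram.mem_mk, Finset.mem_union, Finset.mem_image,
    Finset.mem_range, Prod.mk.injEq]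
  constructor
  · rintro (⟨a, ha, h0, rfl⟩ | ⟨a, ha, rfl, rfl⟩)
    · exact Or.inl ⟨h0.symm, ha⟩
    · exact Or.inr ⟨rfl, ha⟩
  · rintro (⟨rfl, hj⟩ | ⟨rfl, hi⟩)
    · exact Or.inl ⟨j, hj, rfl, rfl⟩
    · exact Or.inr ⟨i, hi, rfl, rfl⟩

lemma card_hookYD {N k : ℕ} (h1 : 1 ≤ k) (h2 : k ≤ N) : (hookYD N k).card = N := by
  have hinter : (((Finset.range k).image fun j => ((0:ℕ), j)) ∩
      ((Finset.range (N - k + 1)).image fun i => (i, (0:ℕ)))) = {((0:ℕ), (0:ℕ))} := by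
    ext ⟨i, j⟩
    simp only [Finset.mem_inter, Finset.mem_image, Finset.mem_range, Prod.mk.injEq,
      Finset.mem_singleton]
    constructor
    · rintro ⟨⟨a, ha, h0, rfl⟩, ⟨b, hb, rfl, h0'⟩⟩; exact ⟨h0.symm, h0'.symm⟩
    · rintro ⟨rfl, rfl⟩
      exact ⟨⟨0, by omega, rfl, rfl⟩, ⟨0, by omega, rfl, rfl⟩⟩
  have hA : ((Finset.range k).image fun j => ((0:ℕ), j)).card = k := by
    rw [Finset.card_image_of_injective _ (fun a b h => by simpa using h)]
    simp
  have hB : ((Finset.range (N - k + 1)).image fun i => (i, (0:ℕ))).card = N - k + 1 := by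
    rw [Finset.card_image_of_injective _ (fun a b h => by simpa using h)]
    simp
  have := Finset.card_union_add_card_inter ((Finset.range k).image fun j => ((0:ℕ), j))
    ((Finset.range (N - k + 1)).image fun i => (i, (0:ℕ)))
  rw [hinter, hA, hB] at this
  simp only [Finset.card_singleton] at this
  show (((Finset.range k).image fun j => ((0:ℕ), j)) ∪
      ((Finset.range (N - k + 1)).image fun i => (i, (0:ℕ)))).card = N
  omega

lemma hook_le_hook {m a m' a' : ℕ} (h1 : a ≤ a') (h2 : m - a ≤ m' - a') :
    hookYD m a ≤ hookYD m' a' := by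
  rw [← YoungDiagram.cells_subset_iff]
  rintro ⟨i, j⟩ h
  rw [YoungDiagram.mem_cells, mem_hookYD] at h ⊢
  omega

lemma step2 {m a : ℕ} (h1 : 1 ≤ a) (h2 : a ≤ m) :
    IsHorizontalTwoStrip (hookYD m a) (hookYD (m + 2) (a + 2)) := by
  refine ⟨hook_le_hook (by omega) (by omega), ?_, ?_⟩
  · rw [card_hookYD h1 h2, card_hookYD (by omega) (by omega)]
  · intro i₁ i₂ j hm1 hm2
    rw [Finset.mem_sdiff, YoungDiagram.mem_cells, YoungDiagram.mem_cells,
      mem_hookYD, mem_hookYD] at hm1 hm2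
    omega

lemma step1 {m a : ℕ} (h1 : 1 ≤ a) (h2 : a ≤ m) :
    IsHorizontalTwoStrip (hookYD m a) (hookYD (m + 2) (a + 1)) := by
  refine ⟨hook_le_hook (by omega) (by omega), ?_, ?_⟩
  · rw [card_hookYD h1 h2, card_hookYD (by omega) (by omega)]
  · intro i₁ i₂ j hm1 hm2
    rw [Finset.mem_sdiff, YoungDiagram.mem_cells, YoungDiagram.mem_cells,
      mem_hookYD, mem_hookYD] at hm1 hm2
    omega

/-- A nonempty Young diagram avoiding `(1,1)` is a hook. -/
lemma eq_hook_of_not_mem {μ : YoungDiagram} (h00 : (0, 0) ∈ μ) (h11 : (1, 1) ∉ μ) :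
    μ = hookYD (μ.rowLen 0 + μ.colLen 0 - 1) (μ.rowLen 0) := by
  have ha : 1 ≤ μ.rowLen 0 := by
    have := YoungDiagram.mem_iff_lt_rowLen.mp h00; omega
  have hc : 1 ≤ μ.colLen 0 := by
    have := YoungDiagram.mem_iff_lt_colLen.mp h00; omega
  ext ⟨i, j⟩
  rw [YoungDiagram.mem_cells, YoungDiagram.mem_cells, mem_hookYD]
  have hsub : μ.rowLen 0 + μ.colLen 0 - 1 - μ.rowLen 0 + 1 = μ.colLen 0 := by omega
  rw [hsub]
  constructor
  · intro h
    rcases Nat.eq_zero_or_pos i with rfl | hi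
    · exact Or.inl ⟨rfl, YoungDiagram.mem_iff_lt_rowLen.mp h⟩
    rcases Nat.eq_zero_or_pos j with rfl | hj
    · exact Or.inr ⟨rfl, YoungDiagram.mem_iff_lt_colLen.mp h⟩
    exact absurd (μ.up_left_mem hi hj h) h11
  · rintro (⟨rfl, hj⟩ | ⟨rfl, hi⟩)
    · exact YoungDiagram.mem_iff_lt_rowLen.mpr hj
    · exact YoungDiagram.mem_iff_lt_colLen.mpr hi

lemma pred_step {m a' : ℕ} {μ : YoungDiagram} (h1 : 1 ≤ a') (h2 : a' ≤ m + 2) (hm : 1 ≤ m)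
    (h : IsHorizontalTwoStrip μ (hookYD (m + 2) a')) :
    ∃ a, (a' = a + 1 ∨ a' = a + 2) ∧ 1 ≤ a ∧ a ≤ m ∧ μ = hookYD m a := by
  obtain ⟨hle, hcard, hcol⟩ := h
  rw [card_hookYD h1 h2] at hcard
  have hcardμ : μ.card = m := by omega
  have h00 : (0, 0) ∈ μ := by
    have hpos : 0 < μ.cells.card := by
      have : μ.cells.card = μ.card := rfl
      omega
    obtain ⟨⟨i, j⟩, hij⟩ := Finset.card_pos.mp hpos
    exact μ.up_left_mem (Nat.zero_le _) (Nat.zero_le _) hij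
  have h11 : (1, 1) ∉ μ := by
    intro hmem
    have := YoungDiagram.cells_subset_iff.mpr hle hmem
    rw [YoungDiagram.mem_cells, mem_hookYD] at this
    omega
  set a := μ.rowLen 0 with hadef
  set c := μ.colLen 0 with hcdef
  have hμ : μ = hookYD (a + c - 1) a := eq_hook_of_not_mem h00 h11
  have ha : 1 ≤ a := by
    have := YoungDiagram.mem_iff_lt_rowLen.mp h00; omega
  have hc : 1 ≤ c := by
    have := YoungDiagram.mem_iff_lt_colLen.mp h00; omega
  have hm' : a + c - 1 = m := by
    have := hμ ▸ hcardμ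
    rwa [card_hookYD ha (by omega)] at this
  -- a ≤ a'
  have haa : a ≤ a' := by
    have : (0, a - 1) ∈ hookYD (m + 2) a' := by
      apply YoungDiagram.cells_subset_iff.mpr hle
      rw [YoungDiagram.mem_cells, hμ, mem_hookYD]
      omega
    rw [mem_hookYD] at this
    omega
  -- c ≤ m + 2 - a' + 1
  have hcc : c ≤ m + 2 - a' + 1 := by
    have : (c - 1, 0) ∈ hookYD (m + 2) a' := by
      apply YoungDiagram.cells_subset_iff.mpr hle
      rw [YoungDiagram.mem_cells, hμ, mem_hookYD]
      omega
    rw [mem_hookYD] at this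
    omega
  -- at most one new cell in column 0
  have hcol0 : m + 2 - a' + 1 ≤ c + 1 := by
    by_contra hcon
    push_neg at hcon
    have hd : ∀ i : ℕ, c ≤ i → i < m + 2 - a' + 1 →
        (i, 0) ∈ (hookYD (m + 2) a').cells \ μ.cells := by
      intro i hi1 hi2
      rw [Finset.mem_sdiff, YoungDiagram.mem_cells, YoungDiagram.mem_cells, mem_hookYD,
        hμ, mem_hookYD]
      omega
    have := hcol c (c + 1) 0 (hd c le_rfl (by omega)) (hd (c + 1) (by omega) (by omega))
    omega
  refine ⟨a, by omega, ha, by omega, ?_⟩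
  rw [hμ, hm']

lemma hook_inj {N a b : ℕ} (ha1 : 1 ≤ a) (ha2 : a ≤ N) (hb1 : 1 ≤ b) (hb2 : b ≤ N)
    (h : hookYD N a = hookYD N b) : a = b := by
  have h1 : (0, a - 1) ∈ hookYD N a := mem_hookYD.mpr (Or.inl ⟨rfl, by omega⟩)
  have h2 : (0, b - 1) ∈ hookYD N b := mem_hookYD.mpr (Or.inl ⟨rfl, by omega⟩)
  rw [h] at h1
  rw [← h] at h2
  rw [mem_hookYD] at h1 h2
  omega

set_option maxHeartbeats 800000 in
/-- For hooks `μ = (l, 1^{n-l})` of `n` and `λ = (k, 1^{N-k})` of `N = n + 2q`, a chain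
`μ = μ₀ ⊂ μ₁ ⊂ ⋯ ⊂ μ_q = λ` with each `μ_{j+1} \ μ_j` a horizontal 2-strip exists if
and only if `0 ≤ 2q - k + l ≤ q`, i.e. `q + l ≤ k ≤ 2q + l`. -/
theorem stmt_11 (n q k l : ℕ) (hl : 1 ≤ l) (hln : l ≤ n) (hk : 1 ≤ k)
    (hkN : k ≤ n + 2 * q) :
    (∃ c : Fin (q + 1) → YoungDiagram,
        c 0 = hookYD n l ∧ c (Fin.last q) = hookYD (n + 2 * q) k ∧
          ∀ j : Fin q, IsHorizontalTwoStrip (c j.castSucc) (c j.succ)) ↔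
      (q + l ≤ k ∧ k ≤ 2 * q + l) := by
  constructor
  · rintro ⟨c, hc0, hcq, hstep⟩
    have key : ∀ t, t ≤ q → ∃ a, k ≤ a + 2 * t ∧ a + t ≤ k ∧ 1 ≤ a ∧
        a ≤ n + 2 * (q - t) ∧
        c ⟨q - t, Nat.lt_succ_of_le (Nat.sub_le q t)⟩ = hookYD (n + 2 * (q - t)) a := by
      intro t
      induction t with
      | zero =>
        intro _
        refine ⟨k, by omega, by omega, hk, by omega, ?_⟩
        simp only [Nat.sub_zero]
        exact hcq
      | succ t ih =>
        intro ht
        obtain ⟨a, hka, hak, ha1, ha2, hc⟩ := ih (by omega)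
        have hq1 : q - t - 1 < q := by omega
        have hsucc : ((⟨q - t - 1, hq1⟩ : Fin q)).succ =
            (⟨q - t, Nat.lt_succ_of_le (Nat.sub_le q t)⟩ : Fin (q + 1)) := by
          apply Fin.ext; simp; omega
        have hcs : ((⟨q - t - 1, hq1⟩ : Fin q)).castSucc =
            (⟨q - (t + 1), Nat.lt_succ_of_le (Nat.sub_le q (t + 1))⟩ : Fin (q + 1)) := by
          apply Fin.ext; simp; omega
        have hstep' := hstep ⟨q - t - 1, hq1⟩
        rw [hsucc, hcs, hc] at hstep'
        have hEq : n + 2 * (q - t) = n + 2 * (q - (t + 1)) + 2 := by omega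
        rw [hEq] at hstep'
        obtain ⟨a₀, haa, ha₀1, ha₀2, hμ⟩ :=
          pred_step (by omega) (by omega) (by omega) hstep'
        exact ⟨a₀, by omega, by omega, ha₀1, by omega, hμ⟩
    obtain ⟨a, hka, hak, ha1, ha2, hc⟩ := key q le_rfl
    have h0 : (⟨q - q, Nat.lt_succ_of_le (Nat.sub_le q q)⟩ : Fin (q + 1)) = 0 := by
      apply Fin.ext; simp
    rw [h0, hc0] at hc
    have hEq : n + 2 * (q - q) = n := by omega
    rw [hEq] at hc
    have : l = a := hook_inj hl hln ha1 (by omega) hc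
    omega
  · rintro ⟨hk1, hk2⟩
    set r := k - l - q with hr
    refine ⟨fun j => hookYD (n + 2 * (j : ℕ)) (l + min (2 * (j : ℕ)) ((j : ℕ) + r)),
      ?_, ?_, ?_⟩
    · show hookYD (n + 2 * ((0 : Fin (q + 1)) : ℕ)) _ = _
      simp
    · show hookYD (n + 2 * ((Fin.last q : Fin (q + 1)) : ℕ)) _ = _
      rw [Fin.val_last]
      congr 1
      omega
    · intro j
      show IsHorizontalTwoStrip
        (hookYD (n + 2 * (j.castSucc : ℕ)) (l + min (2 * (j.castSucc : ℕ)) ((j.castSucc : ℕ) + r)))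
        (hookYD (n + 2 * (j.succ : ℕ)) (l + min (2 * (j.succ : ℕ)) ((j.succ : ℕ) + r)))
      rw [Fin.coe_castSucc, Fin.val_succ]
      rcases lt_or_ge (j : ℕ) r with hjr | hjr
      · rw [show l + min (2 * (j : ℕ)) ((j : ℕ) + r) = l + 2 * (j : ℕ) from by omega,
          show n + 2 * ((j : ℕ) + 1) = n + 2 * (j : ℕ) + 2 from by omega,
          show l + min (2 * ((j : ℕ) + 1)) ((j : ℕ) + 1 + r) = l + 2 * (j : ℕ) + 2 from by
            have := j.isLt; omega]
        exact step2 (by omega) (by omega)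
      · rw [show l + min (2 * (j : ℕ)) ((j : ℕ) + r) = l + ((j : ℕ) + r) from by omega,
          show n + 2 * ((j : ℕ) + 1) = n + 2 * (j : ℕ) + 2 from by omega,
          show l + min (2 * ((j : ℕ) + 1)) ((j : ℕ) + 1 + r) = l + ((j : ℕ) + r) + 1 from by
            omega]
        exact step1 (by omega) (by omega)
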